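/- Let a, σ > 0, b ≥ 0, τ > 0, T ∈ ℝ, and let w ∈ [0, (k(0)−a)/σ²) where k(x) := √(a² + 2(1+b·x)·σ²), so k(0) = √(a²+2σ²). Then there exists a unique sequence of differentiable functions (φⱼ)ⱼ≥₀, with φ₀ : [T−τ, T] → ℝ and φⱼ : [T−(j+1)τ, T−jτ] → ℝ for j ≥ 1, such that: φ₀(T) = w and φ₀′(t) = (σ²/2)·φ₀(t)² + a·φ₀(t) − 1 for all t ∈ [T−τ, T]; and for every j ≥ 1, φⱼ(T−jτ) = φⱼ₋₁(T−jτ) and φⱼ′(t) = (σ²/2)·φⱼ(t)² + a·φⱼ(t) − 1 − b·φⱼ₋₁(t+τ) for all t ∈ [T−(j+1)τ, T−jτ]. Moreover each φⱼ is nonnegative, and φⱼ(t) > 0 for all t < T. -/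

import Mathlib

/-- The domain [T−(j+1)τ, T−jτ] of the j-th component of the recursive delayed
Riccati system. -/
def riccatiDom (T τ : ℝ) (j : ℕ) : Set ℝ :=
  Set.Icc (T - ((j : ℝ) + 1) * τ) (T - (j : ℝ) * τ)

/-- The recursive delayed Riccati system with delay τ, horizon T and final datum w:
φ₀′ = (σ²/2)φ₀² + aφ₀ − 1 on [T−τ,T] with φ₀(T) = w, and for j ≥ 1,
φⱼ′ = (σ²/2)φⱼ² + aφⱼ − 1 − b·φⱼ₋₁(t+τ) on [T−(j+1)τ, T−jτ] with
φⱼ(T−jτ) = φⱼ₋₁(T−jτ). -/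
def DelayedRiccatiSol (a b σ τ T w : ℝ) (φ : ℕ → ℝ → ℝ) : Prop :=
  φ 0 T = w ∧
  (∀ t ∈ riccatiDom T τ 0, HasDerivWithinAt (φ 0)
    (σ ^ 2 / 2 * (φ 0 t) ^ 2 + a * φ 0 t - 1) (riccatiDom T τ 0) t) ∧
  (∀ j : ℕ, φ (j + 1) (T - ((j : ℝ) + 1) * τ) = φ j (T - ((j : ℝ) + 1) * τ)) ∧
  (∀ j : ℕ, ∀ t ∈ riccatiDom T τ (j + 1), HasDerivWithinAt (φ (j + 1))
    (σ ^ 2 / 2 * (φ (j + 1) t) ^ 2 + a * φ (j + 1) t - 1 - b * φ j (t + τ))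
    (riccatiDom T τ (j + 1)) t)

open Set

/-!
Each block `φⱼ` solves a scalar Riccati equation `φ' = p(φ) - r(t)`, `p x = (σ²/2)x² + ax`,
backwards from its right endpoint, with forcing `r = 1` resp. `r = 1 + b·φⱼ₋₁(· + τ)`. As long
as `φⱼ₋₁ ≥ 0` we have `r > 0 = p 0`, so the level `0` cannot be crossed backwards in time and a
zero of `φⱼ` before the endpoint would force `φⱼ' < 0` at a minimum; a constant `c` with
`p c > max r` is an upper barrier, so the solution exists on the whole block. Uniqueness is
Lipschitz uniqueness for the same ODE, block by block.
-/

theorem image_le_const_of_right_le_of_deriv_pos {f f' : ℝ → ℝ} {a b c : ℝ}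
    (hf : ∀ t ∈ Icc a b, HasDerivWithinAt f (f' t) (Icc a b) t) (hb : f b ≤ c)
    (bound : ∀ t ∈ Ioc a b, f t = c → 0 < f' t) : ∀ t ∈ Icc a b, f t ≤ c := by
  have hneg : MapsTo Neg.neg (Icc (-b) (-a)) (Icc a b) :=
    fun _ hs ↦ ⟨le_neg.mp hs.2, neg_le.mp hs.1⟩
  have hrefl (s : ℝ) (hs : s ∈ Icc (-b) (-a)) :
      HasDerivWithinAt (f ∘ Neg.neg) (f' (-s) * -1) (Icc (-b) (-a)) s :=
    (hf (-s) (hneg hs)).comp s (hasDerivWithinAt_neg s _) hneg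
  intro t ht
  simpa using image_le_of_deriv_right_lt_deriv_boundary (B := fun _ ↦ c) (B' := 0)
    (fun s hs ↦ (hrefl s hs).continuousWithinAt)
    (fun s hs ↦ (hrefl s (Ico_subset_Icc_self hs)).mono_of_mem_nhdsWithin
      (Icc_mem_nhdsGE_of_mem hs))
    (by simpa using hb) (fun _ ↦ hasDerivAt_const _ _)
    (fun s hs hfs ↦ by
      have := bound (-s) ⟨lt_neg.mp hs.2, neg_le.mp hs.1⟩ hfs
      simp only [Pi.zero_apply]; linarith)
    (x := -t) ⟨neg_le_neg ht.2, neg_le_neg ht.1⟩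

theorem const_le_image_of_le_right_of_deriv_neg {f f' : ℝ → ℝ} {a b c : ℝ}
    (hf : ∀ t ∈ Icc a b, HasDerivWithinAt f (f' t) (Icc a b) t) (hb : c ≤ f b)
    (bound : ∀ t ∈ Ioc a b, f t = c → f' t < 0) : ∀ t ∈ Icc a b, c ≤ f t := fun t ht ↦
  neg_le_neg_iff.mp <| image_le_const_of_right_le_of_deriv_pos (f := -f) (c := -c)
    (fun s hs ↦ (hf s hs).neg) (neg_le_neg hb)
    (fun s hs hfs ↦ neg_pos.mpr (bound s hs (neg_inj.mp hfs))) t ht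

theorem HasDerivWithinAt.nonneg_of_isMinOn_Icc {f : ℝ → ℝ} {a b t d : ℝ} (ht : t ∈ Ico a b)
    (hf : HasDerivWithinAt f d (Icc a b) t) (hmin : IsMinOn f (Icc a b) t) : 0 ≤ d := by
  have hcone : b - t ∈ posTangentConeAt (Icc a b) t :=
    sub_mem_posTangentConeAt_of_segment_subset ((segment_eq_Icc ht.2.le).trans_subset
      (Icc_subset_Icc_left ht.1))
  have hprod : 0 ≤ (b - t) * d := by
    simpa using hmin.localize.hasFDerivWithinAt_nonneg hf hcone
  exact nonneg_of_mul_nonneg_right hprod (sub_pos.mpr ht.2)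

def IsSolOn (p r : ℝ → ℝ) (s : Set ℝ) (f : ℝ → ℝ) : Prop :=
  ∀ t ∈ s, HasDerivWithinAt f (p (f t) - r t) s t

namespace IsSolOn

variable {p r f g : ℝ → ℝ} {s : Set ℝ} {α β c : ℝ}

theorem continuousOn (h : IsSolOn p r s f) : ContinuousOn f s :=
  fun t ht ↦ (h t ht).continuousWithinAt

theorem congr_forcing {r' : ℝ → ℝ} (h : IsSolOn p r s f) (hr : EqOn r r' s) :
    IsSolOn p r' s f :=
  fun t ht ↦ hr ht ▸ h t ht

theorem eqOn (hp : LocallyLipschitz p) (hf : IsSolOn p r (Icc α β) f)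
    (hg : IsSolOn p r (Icc α β) g) (hβ : f β = g β) : EqOn f g (Icc α β) := by
  set u := f '' Icc α β ∪ g '' Icc α β
  have hu : IsCompact u := (isCompact_Icc.image_of_continuousOn hf.continuousOn).union
    (isCompact_Icc.image_of_continuousOn hg.continuousOn)
  obtain ⟨K, hK⟩ := hp.locallyLipschitzOn.exists_lipschitzOnWith_of_compact hu
  have hv (t : ℝ) : LipschitzOnWith K (fun x ↦ p x - r t) u :=
    fun x hx y hy ↦ by simpa only [edist_sub_right] using hK hx hy
  have hleft {h : ℝ → ℝ} (hh : IsSolOn p r (Icc α β) h) (t : ℝ) (ht : t ∈ Ioc α β) :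
      HasDerivWithinAt h (p (h t) - r t) (Iic t) t :=
    (hh t (Ioc_subset_Icc_self ht)).mono_of_mem_nhdsWithin (Icc_mem_nhdsLE_of_mem ht)
  exact ODE_solution_unique_of_mem_Icc_left (fun t _ ↦ hv t) hf.continuousOn (hleft hf)
    (fun t ht ↦ .inl (mem_image_of_mem f (Ioc_subset_Icc_self ht))) hg.continuousOn (hleft hg)
    (fun t ht ↦ .inr (mem_image_of_mem g (Ioc_subset_Icc_self ht))) hβ

theorem le_const_of_right_le (h : IsSolOn p r (Icc α β) f) (hβ : f β ≤ c)
    (hc : ∀ t ∈ Ioc α β, r t < p c) : ∀ t ∈ Icc α β, f t ≤ c :=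
  image_le_const_of_right_le_of_deriv_pos h hβ fun t ht hft ↦ by
    rw [hft, sub_pos]; exact hc t ht

theorem const_le_of_le_right (h : IsSolOn p r (Icc α β) f) (hβ : c ≤ f β)
    (hc : ∀ t ∈ Ioc α β, p c < r t) : ∀ t ∈ Icc α β, c ≤ f t :=
  const_le_image_of_le_right_of_deriv_neg h hβ fun t ht hft ↦ by
    rw [hft, sub_neg]; exact hc t ht

theorem const_lt_of_le_right (h : IsSolOn p r (Icc α β) f) (hβ : c ≤ f β)
    (hc : ∀ t ∈ Icc α β, p c < r t) : ∀ t ∈ Ico α β, c < f t := by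
  have hf := h.const_le_of_le_right hβ fun t ht ↦ hc t (Ioc_subset_Icc_self ht)
  intro t ht
  refine (hf t (Ico_subset_Icc_self ht)).lt_of_ne fun hct ↦ ?_
  have hmin : IsMinOn f (Icc α β) t := fun x hx ↦ hct ▸ hf x hx
  have hderiv := (h t (Ico_subset_Icc_self ht)).nonneg_of_isMinOn_Icc ht hmin
  rw [← hct, sub_nonneg] at hderiv
  exact (hc t (Ico_subset_Icc_self ht)).not_ge hderiv

theorem nonneg_and_pos {T : ℝ} (h : IsSolOn p r (Icc α β) f) (hr : ∀ t ∈ Icc α β, p 0 < r t)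
    (hβ : 0 ≤ f β) (hβT : β < T → 0 < f β) : ∀ t ∈ Icc α β, 0 ≤ f t ∧ (t < T → 0 < f t) := by
  refine fun t ht ↦ ⟨h.const_le_of_le_right hβ (fun s hs ↦ hr s (Ioc_subset_Icc_self hs)) t ht,
    fun htT ↦ ?_⟩
  rcases ht.2.lt_or_eq with htβ | rfl
  · exact h.const_lt_of_le_right hβ hr t ⟨ht.1, htβ⟩
  · exact hβT htT

end IsSolOn

theorem exists_isSolOn_Icc {p r : ℝ → ℝ} {α β c₀ c₁ w : ℝ} (hp : LocallyLipschitz p)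
    (hαβ : α ≤ β) (hr : ContinuousOn r (Icc α β)) (hlo : ∀ t ∈ Icc α β, p c₀ < r t)
    (hhi : ∀ t ∈ Icc α β, r t < p c₁) (hw : w ∈ Icc c₀ c₁) :
    ∃ f, f β = w ∧ IsSolOn p r (Icc α β) f := by
  have hc : c₀ ≤ c₁ := hw.1.trans hw.2
  -- Picard–Lindelöf applies on all of `[α, β]` to `p` clamped outside `[c₀, c₁]`, and the
  -- barriers `c₀`, `c₁` keep the solution inside `[c₀, c₁]`, where the clamping is invisible.
  set q := fun x ↦ p (projIcc c₀ c₁ hc x)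
  have hq (x : ℝ) (hx : x ∈ Icc c₀ c₁) : q x = p x := by simp only [q, projIcc_of_mem hc hx]
  obtain ⟨K, hK⟩ := hp.locallyLipschitzOn.exists_lipschitzOnWith_of_compact
    (isCompact_Icc (a := c₀) (b := c₁))
  have hqK : LipschitzWith K q := by
    rw [← mul_one K]; exact hK.to_restrict.comp (LipschitzWith.projIcc hc)
  obtain ⟨Mp, hMp⟩ := isCompact_Icc.exists_bound_of_continuousOn
    (hp.continuous.continuousOn (s := Icc c₀ c₁))
  obtain ⟨Mr, hMr⟩ := isCompact_Icc.exists_bound_of_continuousOn hr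
  have hM : 0 ≤ Mp + Mr := add_nonneg ((norm_nonneg _).trans (hMp c₀ (left_mem_Icc.2 hc)))
    ((norm_nonneg _).trans (hMr β (right_mem_Icc.2 hαβ)))
  have hPL : IsPicardLindelof (fun t x ↦ q x - r t) (tmin := α) (tmax := β)
      ⟨β, right_mem_Icc.2 hαβ⟩ w ⟨(Mp + Mr) * (β - α), by nlinarith⟩ 0 ⟨Mp + Mr, hM⟩ K :=
    { lipschitzOnWith := fun t _ x _ y _ ↦ by simpa only [edist_sub_right] using hqK x y
      continuousOn := fun _ _ ↦ continuousOn_const.sub hr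
      norm_le := fun t ht x _ ↦ (norm_sub_le _ _).trans
        (add_le_add (hMp _ (projIcc c₀ c₁ hc x).2) (hMr t ht))
      mul_max_le := by
        show (Mp + Mr) * max (β - β) (β - α) ≤ (Mp + Mr) * (β - α) - 0
        rw [sub_self, max_eq_right (sub_nonneg.2 hαβ), sub_zero] }
  obtain ⟨f, hfβ, hfq⟩ := hPL.exists_eq_forall_mem_Icc_hasDerivWithinAt₀
  replace hfq : IsSolOn q r (Icc α β) f := hfq
  have hf (t : ℝ) (ht : t ∈ Icc α β) : f t ∈ Icc c₀ c₁ :=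
    ⟨hfq.const_le_of_le_right (hfβ ▸ hw.1)
      (fun s hs ↦ hq c₀ (left_mem_Icc.2 hc) ▸ hlo s (Ioc_subset_Icc_self hs)) t ht,
    hfq.le_const_of_right_le (hfβ ▸ hw.2)
      (fun s hs ↦ hq c₁ (right_mem_Icc.2 hc) ▸ hhi s (Ioc_subset_Icc_self hs)) t ht⟩
  exact ⟨f, hfβ, fun t ht ↦ hq _ (hf t ht) ▸ hfq t ht⟩

noncomputable def riccatiPoly (a σ x : ℝ) : ℝ := σ ^ 2 / 2 * x ^ 2 + a * x

@[simp]
theorem riccatiPoly_zero (a σ : ℝ) : riccatiPoly a σ 0 = 0 := by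
  simp [riccatiPoly]

theorem riccatiPoly_locallyLipschitz (a σ : ℝ) : LocallyLipschitz (riccatiPoly a σ) :=
  (show ContDiff ℝ 1 (riccatiPoly a σ) by unfold riccatiPoly; fun_prop).locallyLipschitz

theorem exists_riccatiPoly_isSolOn {a σ α β w : ℝ} {r : ℝ → ℝ} (ha : 0 < a) (hαβ : α ≤ β)
    (hr : ContinuousOn r (Icc α β)) (hr0 : ∀ t ∈ Icc α β, 0 < r t) (hw : 0 ≤ w) :
    ∃ f, f β = w ∧ IsSolOn (riccatiPoly a σ) r (Icc α β) f := by
  obtain ⟨M, hM⟩ := isCompact_Icc.exists_bound_of_continuousOn hr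
  set c := max w (M / a) + 1
  have hac : M < a * c := by
    have : M ≤ a * max w (M / a) := (div_le_iff₀' ha).mp (le_max_right _ _)
    linarith
  refine exists_isSolOn_Icc (c₁ := c) (riccatiPoly_locallyLipschitz a σ) hαβ hr
    (fun t ht ↦ (riccatiPoly_zero a σ).symm ▸ hr0 t ht) (fun t ht ↦ ?_)
    ⟨hw, by linarith [le_max_left w (M / a)]⟩
  calc r t ≤ M := (le_abs_self _).trans (hM t ht)
    _ < a * c := hac
    _ ≤ riccatiPoly a σ c := by unfold riccatiPoly; nlinarith [sq_nonneg (σ * c)]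

section RiccatiDom

variable {T τ t : ℝ} {j : ℕ}

theorem riccatiDom_zero : riccatiDom T τ 0 = Icc (T - τ) T := by
  simp [riccatiDom]

theorem riccatiDom_succ :
    riccatiDom T τ (j + 1) = Icc (T - ((j : ℝ) + 1 + 1) * τ) (T - ((j : ℝ) + 1) * τ) := by
  simp [riccatiDom]

theorem add_mem_riccatiDom (ht : t ∈ riccatiDom T τ (j + 1)) : t + τ ∈ riccatiDom T τ j := by
  rw [riccatiDom_succ] at ht
  constructor <;> linarith [ht.1, ht.2]

theorem left_mem_riccatiDom (hτ : 0 ≤ τ) : T - ((j : ℝ) + 1) * τ ∈ riccatiDom T τ j :=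
  ⟨le_rfl, by linarith⟩

end RiccatiDom

theorem delayedRiccatiSol_iff {a b σ τ T w : ℝ} {φ : ℕ → ℝ → ℝ} :
    DelayedRiccatiSol a b σ τ T w φ ↔
      φ 0 T = w ∧ IsSolOn (riccatiPoly a σ) (fun _ ↦ 1) (riccatiDom T τ 0) (φ 0) ∧
      (∀ j : ℕ, φ (j + 1) (T - ((j : ℝ) + 1) * τ) = φ j (T - ((j : ℝ) + 1) * τ)) ∧
      ∀ j : ℕ, IsSolOn (riccatiPoly a σ) (fun t ↦ 1 + b * φ j (t + τ))
        (riccatiDom T τ (j + 1)) (φ (j + 1)) := by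
  simp only [DelayedRiccatiSol, IsSolOn, riccatiPoly, sub_sub]

theorem DelayedRiccatiSol.eqOn {a b σ τ T w : ℝ} {φ ψ : ℕ → ℝ → ℝ} (hτ : 0 ≤ τ)
    (hφ : DelayedRiccatiSol a b σ τ T w φ) (hψ : DelayedRiccatiSol a b σ τ T w ψ) :
    ∀ j, EqOn (φ j) (ψ j) (riccatiDom T τ j) := by
  obtain ⟨hφT, hφ₀, hφβ, hφ⟩ := delayedRiccatiSol_iff.mp hφ
  obtain ⟨hψT, hψ₀, hψβ, hψ⟩ := delayedRiccatiSol_iff.mp hψ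
  intro j
  induction j with
  | zero =>
    rw [riccatiDom_zero] at hφ₀ hψ₀ ⊢
    exact hφ₀.eqOn (riccatiPoly_locallyLipschitz a σ) hψ₀ (hφT.trans hψT.symm)
  | succ j ih =>
    have hψ' := (hψ j).congr_forcing (r' := fun t ↦ 1 + b * φ j (t + τ)) fun t ht ↦ by
      simp only [ih (add_mem_riccatiDom ht)]
    have hβ : φ (j + 1) (T - ((j : ℝ) + 1) * τ) = ψ (j + 1) (T - ((j : ℝ) + 1) * τ) := by
      rw [hφβ, hψβ, ih (left_mem_riccatiDom hτ)]
    rw [riccatiDom_succ] at hψ' ⊢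
    exact (riccatiDom_succ ▸ hφ j).eqOn (riccatiPoly_locallyLipschitz a σ) hψ' hβ

/-- An arbitrary function when no solution with `f β = w` exists. -/
noncomputable def terminalSol (p r : ℝ → ℝ) (s : Set ℝ) (β w : ℝ) : ℝ → ℝ :=
  Classical.epsilon fun f ↦ f β = w ∧ IsSolOn p r s f

theorem terminalSol_spec {p r : ℝ → ℝ} {s : Set ℝ} {β w : ℝ}
    (h : ∃ f, f β = w ∧ IsSolOn p r s f) :
    terminalSol p r s β w β = w ∧ IsSolOn p r s (terminalSol p r s β w) :=
  Classical.epsilon_spec h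

noncomputable def riccatiSeq (a b σ τ T w : ℝ) : ℕ → ℝ → ℝ
  | 0 => terminalSol (riccatiPoly a σ) (fun _ ↦ 1) (riccatiDom T τ 0) T w
  | j + 1 => terminalSol (riccatiPoly a σ) (fun t ↦ 1 + b * riccatiSeq a b σ τ T w j (t + τ))
      (riccatiDom T τ (j + 1)) (T - ((j : ℝ) + 1) * τ)
      (riccatiSeq a b σ τ T w j (T - ((j : ℝ) + 1) * τ))

section RiccatiSeq

variable {a b σ τ T w : ℝ}

theorem riccatiSeq_zero (ha : 0 < a) (hτ : 0 ≤ τ) (hw : 0 ≤ w) :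
    riccatiSeq a b σ τ T w 0 T = w ∧
      IsSolOn (riccatiPoly a σ) (fun _ ↦ 1) (riccatiDom T τ 0) (riccatiSeq a b σ τ T w 0) :=
  terminalSol_spec <| riccatiDom_zero ▸
    exists_riccatiPoly_isSolOn ha (by linarith) continuousOn_const (fun _ _ ↦ one_pos) hw

theorem riccatiSeq_succ (ha : 0 < a) (hb : 0 ≤ b) (hτ : 0 ≤ τ) (j : ℕ)
    (hcont : ContinuousOn (riccatiSeq a b σ τ T w j) (riccatiDom T τ j))
    (hnonneg : ∀ t ∈ riccatiDom T τ j, 0 ≤ riccatiSeq a b σ τ T w j t) :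
    riccatiSeq a b σ τ T w (j + 1) (T - ((j : ℝ) + 1) * τ) =
        riccatiSeq a b σ τ T w j (T - ((j : ℝ) + 1) * τ) ∧
      IsSolOn (riccatiPoly a σ) (fun t ↦ 1 + b * riccatiSeq a b σ τ T w j (t + τ))
        (riccatiDom T τ (j + 1)) (riccatiSeq a b σ τ T w (j + 1)) := by
  refine terminalSol_spec ?_
  rw [riccatiDom_succ]
  refine exists_riccatiPoly_isSolOn ha (by nlinarith) ?_ ?_
    (hnonneg _ (left_mem_riccatiDom hτ))
  · exact continuousOn_const.add <| continuousOn_const.mul <|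
      hcont.comp (continuous_add_const τ).continuousOn
        fun t ht ↦ add_mem_riccatiDom (riccatiDom_succ ▸ ht)
  · intro t ht
    have := hnonneg _ (add_mem_riccatiDom (riccatiDom_succ ▸ ht))
    positivity

theorem riccatiSeq_continuousOn_and_pos (ha : 0 < a) (hb : 0 ≤ b) (hτ : 0 ≤ τ) (hw : 0 ≤ w)
    (j : ℕ) :
    ContinuousOn (riccatiSeq a b σ τ T w j) (riccatiDom T τ j) ∧
      ∀ t ∈ riccatiDom T τ j, 0 ≤ riccatiSeq a b σ τ T w j t ∧
        (t < T → 0 < riccatiSeq a b σ τ T w j t) := by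
  induction j with
  | zero =>
    obtain ⟨hT, hsol⟩ := riccatiSeq_zero (b := b) ha hτ hw
    rw [riccatiDom_zero] at hsol ⊢
    exact ⟨hsol.continuousOn, hsol.nonneg_and_pos (by simp) (hw.trans_eq hT.symm)
      fun h ↦ h.false.elim⟩
  | succ j ih =>
    obtain ⟨hβ, hsol⟩ := riccatiSeq_succ ha hb hτ j ih.1 fun t ht ↦ (ih.2 t ht).1
    have hβj := ih.2 _ (left_mem_riccatiDom hτ)
    rw [riccatiDom_succ] at hsol ⊢
    refine ⟨hsol.continuousOn, hsol.nonneg_and_pos (fun t ht ↦ ?_) (hβ ▸ hβj.1)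
      fun hβT ↦ hβ ▸ hβj.2 hβT⟩
    have := (ih.2 _ (add_mem_riccatiDom (riccatiDom_succ ▸ ht))).1
    rw [riccatiPoly_zero]; positivity

theorem riccatiSeq_delayedRiccatiSol (ha : 0 < a) (hb : 0 ≤ b) (hτ : 0 ≤ τ) (hw : 0 ≤ w) :
    DelayedRiccatiSol a b σ τ T w (riccatiSeq a b σ τ T w) := by
  have hinv := riccatiSeq_continuousOn_and_pos (σ := σ) (T := T) ha hb hτ hw
  have hsucc (j : ℕ) := riccatiSeq_succ ha hb hτ j (hinv j).1 fun t ht ↦ ((hinv j).2 t ht).1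
  obtain ⟨hT, hsol₀⟩ := riccatiSeq_zero (b := b) (σ := σ) ha hτ hw
  exact delayedRiccatiSol_iff.mpr ⟨hT, hsol₀, fun j ↦ (hsucc j).1, fun j ↦ (hsucc j).2⟩

end RiccatiSeq

theorem delayed_riccati_existence_uniqueness_general
    (a b σ τ T w : ℝ) (ha : 0 < a) (hb : 0 ≤ b) (hτ : 0 < τ)
    (hw : w ∈ Set.Ico (0 : ℝ) ((Real.sqrt (a ^ 2 + 2 * σ ^ 2) - a) / σ ^ 2)) :
    ∃ φ : ℕ → ℝ → ℝ,
      DelayedRiccatiSol a b σ τ T w φ ∧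
      (∀ j : ℕ, ∀ t ∈ riccatiDom T τ j, 0 ≤ φ j t ∧ (t < T → 0 < φ j t)) ∧
      (∀ φ' : ℕ → ℝ → ℝ, DelayedRiccatiSol a b σ τ T w φ' →
        ∀ j : ℕ, ∀ t ∈ riccatiDom T τ j, φ' j t = φ j t) := by
  have hsol := riccatiSeq_delayedRiccatiSol (σ := σ) (T := T) ha hb hτ.le hw.1
  exact ⟨riccatiSeq a b σ τ T w, hsol,
    fun j ↦ (riccatiSeq_continuousOn_and_pos ha hb hτ.le hw.1 j).2,
    fun φ' hφ' j ↦ hφ'.eqOn hτ.le hsol j⟩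

/-- for a, σ > 0, b ≥ 0, τ > 0 and 0 ≤ w < (k(0)−a)/σ²
(k(0) = √(a²+2σ²)), the recursive delayed Riccati system has a unique solution;
each component is nonnegative on its domain and positive for t < T. -/
theorem delayed_riccati_existence_uniqueness
    (a b σ τ T w : ℝ) (ha : 0 < a) (hσ : 0 < σ) (hb : 0 ≤ b) (hτ : 0 < τ)
    (hw : w ∈ Set.Ico (0 : ℝ) ((Real.sqrt (a ^ 2 + 2 * σ ^ 2) - a) / σ ^ 2)) :
    ∃ φ : ℕ → ℝ → ℝ,
      DelayedRiccatiSol a b σ τ T w φ ∧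
      (∀ j : ℕ, ∀ t ∈ riccatiDom T τ j, 0 ≤ φ j t ∧ (t < T → 0 < φ j t)) ∧
      (∀ φ' : ℕ → ℝ → ℝ, DelayedRiccatiSol a b σ τ T w φ' →
        ∀ j : ℕ, ∀ t ∈ riccatiDom T τ j, φ' j t = φ j t) :=
  delayed_riccati_existence_uniqueness_general a b σ τ T w ha hb hτ hw
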